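/- Let A be a unital C*-algebra, M ≥ 1, and let a₁,…,a_n ∈ A be self-adjoint elements with ‖a_i‖ ≤ M such that a_ia_j = a_ja_i for all 1 ≤ i,j ≤ n. Then for every 0 < η < 1 the joint spectrum Sp((a₁,…,a_n)) is contained in the η-synthetic spectrum sSp^η((a₁,…,a_n)). -/

import Mathlib

open scoped ComplexOrder

noncomputable def theta (lam eta : ℝ) : ℝ → ℝ :=
  fun t => max 0 (min 1 ((eta - |t - lam|) / (eta / 4)))

/-- `Θ_{ξ,η}(a₁,…,a_n)`: ordered product of `θ_{ξᵢ,η}(aᵢ)` (continuous functional calculus). -/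
noncomputable def ThetaProd {A : Type*} [CStarAlgebra A] {n : ℕ}
    (xi : Fin n → ℝ) (eta : ℝ) (a : Fin n → A) : A :=
  (List.ofFn (fun i => cfc (theta (xi i) eta) (a i))).prod

/-- The grid size `k`: the smallest positive integer with `(M+1)/k < η/(2√n)`. -/
noncomputable def gridSize (n : ℕ) (M eta : ℝ) : ℕ :=
  sInf {k : ℕ | 0 < k ∧ (M + 1) / (k : ℝ) < eta / (2 * Real.sqrt n)}

/-- The grid `D^η ⊆ ℝⁿ`. -/
def grid (n : ℕ) (M eta : ℝ) : Set (EuclideanSpace ℝ (Fin n)) :=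
  {x | ∃ m : Fin n → ℤ, (∀ i, x i = (m i : ℝ) / (gridSize n M eta)) ∧
        ∀ i, |(m i : ℝ)| ≤ M * (gridSize n M eta)}

/-- The `η`-synthetic spectrum of an `n`-tuple of self-adjoint elements. -/
noncomputable def sSp {A : Type*} [CStarAlgebra A] (n : ℕ) (M eta : ℝ)
    (a : Fin n → A) : Set (EuclideanSpace ℝ (Fin n)) :=
  ⋃ x ∈ {x ∈ grid n M eta | 1 - eta ≤ ‖ThetaProd x eta a‖}, Metric.closedBall x eta

noncomputable def expVal {H : Type*} [NormedAddCommGroup H] [InnerProductSpace ℂ H]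
    (T : H →L[ℂ] H) (v : H) : ℝ :=
  RCLike.re (inner ℂ (T v) v : ℂ)

noncomputable def sd {H : Type*} [NormedAddCommGroup H] [InnerProductSpace ℂ H]
    (T : H →L[ℂ] H) (v : H) : ℝ :=
  ‖T v - expVal T v • v‖


/-- The unital C*-subalgebra generated by `1, b₁, …, b_n`. -/
noncomputable def genCStarSubalgebra {A : Type*} [CStarAlgebra A] {n : ℕ} (b : Fin n → A) :
    StarSubalgebra ℂ A :=
  (StarAlgebra.adjoin ℂ (Set.range b)).topologicalClosure

theorem mem_genCStarSubalgebra {A : Type*} [CStarAlgebra A] {n : ℕ} (b : Fin n → A) (i : Fin n) :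
    b i ∈ genCStarSubalgebra b :=
  (StarAlgebra.adjoin ℂ (Set.range b)).le_topologicalClosure
    (StarAlgebra.subset_adjoin ℂ _ ⟨i, rfl⟩)

/-- The joint spectrum of a commuting tuple of self-adjoint elements: the set of
`(χ(b₁),…,χ(b_n))` as `χ` ranges over the characters of the unital C*-subalgebra generated by
`1, b₁, …, b_n`. -/
noncomputable def jointSpectrum {A : Type*} [CStarAlgebra A] {n : ℕ} (b : Fin n → A) :
    Set (EuclideanSpace ℝ (Fin n)) :=
  {lam | ∃ χ ∈ WeakDual.characterSpace ℂ (genCStarSubalgebra b),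
      ∀ i, χ (⟨b i, mem_genCStarSubalgebra b i⟩ : genCStarSubalgebra b) = (lam i : ℂ)}

/-! A point `λ` of the joint spectrum comes from a character `χ` with `χ(aᵢ) = λᵢ`, so
`|λᵢ| ≤ ‖aᵢ‖ ≤ M`, and rounding `kλ` towards zero gives a grid point `x` with
`|λᵢ - xᵢ| ≤ 1/k`, hence `‖λ - x‖ ≤ √n/k < η/2`. As `χ` commutes with the continuous
functional calculus, `χ(Θ_{x,η}(a)) = ∏ θ_{xᵢ,η}(λᵢ) = 1`; thus `1` lies in the spectrum of
`Θ_{x,η}(a)`, whose norm is therefore at least `1`. -/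

lemma continuous_theta (lam eta : ℝ) : Continuous (theta lam eta) := by
  unfold theta; fun_prop

lemma theta_eq_one {lam eta t : ℝ} (heta : 0 < eta) (h : |t - lam| ≤ 3 * eta / 4) :
    theta lam eta t = 1 := by
  have : 1 ≤ (eta - |t - lam|) / (eta / 4) := (le_div_iff₀ (by linarith)).mpr (by linarith)
  simp [theta, this]

section ThetaProd

variable {n : ℕ} (xi : Fin n → ℝ) (eta : ℝ)

lemma map_thetaProd {B C F : Type*} [CStarAlgebra B] [CStarAlgebra C] [FunLike F B C]
    [AlgHomClass F ℂ B C] [StarHomClass F B C] (φ : F) (hφ : Continuous φ) {a : Fin n → B}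
    (ha : ∀ i, IsSelfAdjoint (a i)) :
    φ (ThetaProd xi eta a) = ThetaProd xi eta (φ ∘ a) := by
  simp only [ThetaProd, map_list_prod, List.map_ofFn]
  refine congrArg _ (congrArg _ (funext fun i => ?_))
  exact StarAlgHomClass.map_cfc (S := ℂ) φ _ _ (continuous_theta _ _).continuousOn hφ (ha i)
    ((ha i).map φ)

lemma thetaProd_ofReal (t : Fin n → ℝ) :
    ThetaProd xi eta (fun i => (t i : ℂ)) = ((∏ i, theta (xi i) eta (t i) : ℝ) : ℂ) := by
  simp only [ThetaProd, List.prod_ofFn, Complex.ofReal_prod]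
  congr 1
  funext i
  exact cfc_algebraMap (A := ℂ) (t i) _

end ThetaProd

instance isClosed_genCStarSubalgebra {A : Type*} [CStarAlgebra A] {n : ℕ} (b : Fin n → A) :
    IsClosed (genCStarSubalgebra b : Set A) :=
  StarSubalgebra.isClosed_topologicalClosure _

lemma WeakDual.CharacterSpace.norm_apply_le {B : Type*} [CStarAlgebra B]
    (χ : WeakDual.characterSpace ℂ B) (b : B) : ‖χ b‖ ≤ ‖b‖ := by
  have : Nontrivial B := not_subsingleton_iff_nontrivial.mp fun _ => IsEmpty.false χ
  exact spectrum.norm_le_norm_of_mem (apply_mem_spectrum χ b)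

section JointSpectrum

variable {A : Type*} [CStarAlgebra A] {n : ℕ} {a : Fin n → A}

lemma abs_le_norm_of_mem_jointSpectrum {lam : EuclideanSpace ℝ (Fin n)}
    (hlam : lam ∈ jointSpectrum a) (i : Fin n) : |lam i| ≤ ‖a i‖ := by
  obtain ⟨χ, hχ, hχa⟩ := hlam
  have := WeakDual.CharacterSpace.norm_apply_le ⟨χ, hχ⟩ ⟨a i, mem_genCStarSubalgebra a i⟩
  rwa [show (⟨χ, hχ⟩ : WeakDual.characterSpace ℂ _) _ = _ from hχa i, Complex.norm_real,
    Real.norm_eq_abs] at this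

lemma one_le_norm_thetaProd_of_mem_jointSpectrum (hsa : ∀ i, IsSelfAdjoint (a i))
    {lam x : EuclideanSpace ℝ (Fin n)} (hlam : lam ∈ jointSpectrum a) {eta : ℝ} (heta : 0 < eta)
    (hx : ∀ i, |lam i - x i| ≤ 3 * eta / 4) :
    1 ≤ ‖ThetaProd x eta a‖ := by
  set S := genCStarSubalgebra a
  obtain ⟨χ, hχ, hχa⟩ := hlam
  let χ' : WeakDual.characterSpace ℂ S := ⟨χ, hχ⟩
  let b : Fin n → S := fun i => ⟨a i, mem_genCStarSubalgebra a i⟩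
  have hb : ∀ i, IsSelfAdjoint (b i) := fun i => Subtype.ext (hsa i)
  have hΘ : ThetaProd x eta a = ThetaProd x eta b :=
    (map_thetaProd x eta S.subtype continuous_subtype_val hb).symm
  have hχΘ : χ' (ThetaProd x eta b) = 1 := by
    have hχb : χ' ∘ b = fun i => (lam i : ℂ) := funext hχa
    rw [map_thetaProd x eta χ' (map_continuous χ') hb, hχb, thetaProd_ofReal,
      Finset.prod_eq_one fun i _ => theta_eq_one heta (hx i)]
    simp
  calc (1 : ℝ) = ‖χ' (ThetaProd x eta b)‖ := by rw [hχΘ, norm_one]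
    _ ≤ ‖ThetaProd x eta b‖ := WeakDual.CharacterSpace.norm_apply_le χ' _
    _ = ‖ThetaProd x eta a‖ := by rw [hΘ]; rfl

end JointSpectrum

lemma EuclideanSpace.dist_le_sqrt_card_mul {ι : Type*} [Fintype ι] {x y : EuclideanSpace ℝ ι}
    {r : ℝ} (hr : 0 ≤ r) (h : ∀ i, |x i - y i| ≤ r) : dist x y ≤ √(Fintype.card ι) * r := by
  rw [EuclideanSpace.dist_eq]
  calc √(∑ i, dist (x i) (y i) ^ 2) ≤ √(∑ _i : ι, r ^ 2) :=
        Real.sqrt_le_sqrt (Finset.sum_le_sum fun i _ => pow_le_pow_left₀ (abs_nonneg _) (h i) 2)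
    _ = √(Fintype.card ι) * r := by
        rw [Finset.sum_const, Finset.card_univ, nsmul_eq_mul, Real.sqrt_mul (Nat.cast_nonneg _),
          Real.sqrt_sq hr]

lemma exists_int_abs_sub_le_one_of_abs_le {y B : ℝ} (h : |y| ≤ B) :
    ∃ m : ℤ, |(m : ℝ) - y| ≤ 1 ∧ |(m : ℝ)| ≤ B := by
  have of_nonneg : ∀ y : ℝ, 0 ≤ y → y ≤ B → ∃ m : ℤ, |(m : ℝ) - y| ≤ 1 ∧ |(m : ℝ)| ≤ B := by
    intro y hy hyB
    refine ⟨⌊y⌋, ?_, ?_⟩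
    · rw [abs_sub_comm, abs_of_nonneg (sub_nonneg.2 (Int.floor_le y))]
      linarith [Int.lt_floor_add_one y]
    · rw [abs_of_nonneg (mod_cast Int.floor_nonneg.2 hy)]
      exact (Int.floor_le y).trans hyB
  rcases le_total 0 y with hy | hy
  · exact of_nonneg y hy ((le_abs_self y).trans h)
  · obtain ⟨m, hm, hmB⟩ := of_nonneg (-y) (neg_nonneg.2 hy) ((neg_le_abs y).trans h)
    refine ⟨-m, ?_, by rwa [Int.cast_neg, abs_neg]⟩
    rwa [Int.cast_neg, show -(m : ℝ) - y = -((m : ℝ) - -y) by ring, abs_neg]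

lemma gridSize_spec {n : ℕ} {M eta : ℝ} (hn : 0 < n) (hM : 0 ≤ M) (heta : 0 < eta) :
    0 < gridSize n M eta ∧ (M + 1) / (gridSize n M eta : ℝ) < eta / (2 * √n) := by
  suffices h : {k : ℕ | 0 < k ∧ (M + 1) / (k : ℝ) < eta / (2 * √n)}.Nonempty from Nat.sInf_mem h
  have hsqrt : 0 < √(n : ℝ) := Real.sqrt_pos.2 (mod_cast hn)
  obtain ⟨k, hk⟩ := exists_nat_gt ((M + 1) * (2 * √n) / eta)
  have hk0 : (0 : ℝ) < k := lt_trans (by positivity) hk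
  refine ⟨k, mod_cast hk0, ?_⟩
  rw [div_lt_div_iff₀ hk0 (by positivity)]
  rw [div_lt_iff₀ heta] at hk
  linarith

lemma exists_mem_grid_near {n : ℕ} {M eta : ℝ} (hM : 0 ≤ M) (heta : 0 < eta)
    {lam : EuclideanSpace ℝ (Fin n)} (hlam : ∀ i, |lam i| ≤ M) :
    ∃ x ∈ grid n M eta, (∀ i, |lam i - x i| ≤ eta / 2) ∧ dist lam x ≤ eta / 2 := by
  set k := gridSize n M eta
  have hm : ∀ i, ∃ m : ℤ, |(m : ℝ) - k * lam i| ≤ 1 ∧ |(m : ℝ)| ≤ M * k := fun i =>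
    exists_int_abs_sub_le_one_of_abs_le <| by
      rw [abs_mul, Nat.abs_cast, mul_comm]
      exact mul_le_mul_of_nonneg_right (hlam i) k.cast_nonneg
  choose m hm hmM using hm
  let x : EuclideanSpace ℝ (Fin n) := WithLp.toLp 2 fun i => (m i : ℝ) / k
  have hx : ∀ i, |lam i - x i| ≤ eta / (2 * √n) := by
    intro i
    obtain ⟨hk, hkη⟩ := gridSize_spec i.pos hM heta
    have hk' : (0 : ℝ) < k := mod_cast hk
    calc |lam i - x i| = |(m i : ℝ) - k * lam i| / k := by
          rw [← abs_of_pos hk', ← abs_div, abs_of_pos hk', abs_sub_comm]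
          congr 1
          change (m i : ℝ) / k - lam i = _
          field_simp
      _ ≤ (M + 1) / k := div_le_div_of_nonneg_right (by linarith [hm i]) hk'.le
      _ ≤ eta / (2 * √n) := hkη.le
  refine ⟨x, ⟨m, fun _ => rfl, hmM⟩, fun i => (hx i).trans ?_, ?_⟩
  · have : 1 ≤ √(n : ℝ) := Real.one_le_sqrt.2 (mod_cast i.pos)
    exact div_le_div_of_nonneg_left heta.le (by norm_num) (by linarith)
  · calc dist lam x ≤ √(Fintype.card (Fin n)) * (eta / (2 * √n)) :=
          EuclideanSpace.dist_le_sqrt_card_mul (by positivity) hx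
      _ = eta / 2 * (√n / √n) := by rw [Fintype.card_fin]; ring
      _ ≤ eta / 2 := mul_le_of_le_one_right (by positivity) (div_self_le_one _)

theorem stmt11_general {A : Type*} [CStarAlgebra A] {n : ℕ} (M : ℝ) (hM : 1 ≤ M)
    (a : Fin n → A) (hsa : ∀ i, IsSelfAdjoint (a i)) (hnorm : ∀ i, ‖a i‖ ≤ M)
    (η : ℝ) (hη : 0 < η) :
    jointSpectrum a ⊆ sSp n M η a := by
  intro lam hlam
  obtain ⟨x, hx, hclose, hdist⟩ := exists_mem_grid_near (by linarith) hη
    fun i => (abs_le_norm_of_mem_jointSpectrum hlam i).trans (hnorm i)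
  have hΘ := one_le_norm_thetaProd_of_mem_jointSpectrum hsa hlam hη
    fun i => (hclose i).trans (by linarith)
  exact Set.mem_iUnion₂.2 ⟨x, ⟨hx, by linarith⟩, Metric.mem_closedBall.2 (by linarith)⟩

theorem stmt11 {A : Type*} [CStarAlgebra A] {n : ℕ} (M : ℝ) (hM : 1 ≤ M)
    (a : Fin n → A) (hsa : ∀ i, IsSelfAdjoint (a i)) (hnorm : ∀ i, ‖a i‖ ≤ M)
    (hcomm : ∀ i j, a i * a j = a j * a i) (η : ℝ) (hη : 0 < η) (hη1 : η < 1) :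
    jointSpectrum a ⊆ sSp n M η a :=
  stmt11_general M hM a hsa hnorm η hη
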